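/- Let r ≥ 1 be an integer, q real with 0 < q < 1, x, w_1, …, w_r positive real numbers, and a_1, …, a_r positive real numbers. For s ∈ ℂ define the Barnes-type multiple q-zeta function ζ_{q,r}(s, x|w_1,…,w_r; a_1,…,a_r) = 2^r Σ_{(m_1,…,m_r)∈ℕ^r} (-1)^{m_1+⋯+m_r} q^{a_1 m_1 + ⋯ + a_r m_r} [x + w_1 m_1 + ⋯ + w_r m_r]_q^{-s}. Then this multiple series converges absolutely for every s ∈ ℂ, and for every integer n ≥ 0 one has ζ_{q,r}(-n, x|w_1,…,w_r; a_1,…,a_r) = E_{n,q}^{(r)}(x|w_1,…,w_r; a_1,…,a_r) = (2^r/(1-q)^n) Σ_{l=0}^n C(n,l)(-1)^l q^{lx} / ∏_{j=1}^r (1+q^{l w_j + a_j}). -/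

import Mathlib

/-!
Expanding `[y]_q^n = (1 - q)^{-n} ∑ₗ C(n,l) (-1)^l q^{l y}` binomially, the `l`-th term of
`ζ_{q,r}(-n)` becomes `q^{l x}` times the product over `j` of the geometric series
`∑ₘ (-q^{l w_j + a_j})^m = 1 / (1 + q^{l w_j + a_j})`. For general `s`, the factor `[y]_q^{-s}`
stays bounded because `[y]_q` lies in `[[x]_q, 1/(1 - q)]` for `y ≥ x`, so absolute convergence
follows from that of `∑ₘ q^{a·m}`, again a product of geometric series.
-/

open Finset

/-- The `q`-analogue `[y]_q = (1 - q^y)/(1 - q)` (real power). -/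
noncomputable def qnum (q y : ℝ) : ℝ := (1 - q ^ y) / (1 - q)

lemma Fin.prod_univ_consEquiv {M ι : Type*} [CommMonoid M] {r : ℕ} (f : Fin (r + 1) → ι → M)
    (p : ι × (Fin r → ι)) :
    ∏ i, f i (Fin.consEquiv (fun _ => ι) p i) = f 0 p.1 * ∏ i : Fin r, f i.succ (p.2 i) := by
  simp [Fin.prod_univ_succ, Fin.consEquiv_apply]

section PiProduct

variable {R ι : Type*} [NormedCommRing R]

lemma summable_norm_prod_pi {r : ℕ} (f : Fin r → ι → R)
    (hf : ∀ i, Summable fun m => ‖f i m‖) :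
    Summable fun m : Fin r → ι => ‖∏ i, f i (m i)‖ := by
  induction r with
  | zero => exact Summable.of_finite
  | succ r ih =>
    refine (Fin.consEquiv fun _ => ι).summable_iff.mp ?_
    simpa only [Function.comp_def, Fin.prod_univ_consEquiv] using
      (hf 0).mul_norm (ih (fun i => f i.succ) fun i => hf i.succ)

lemma hasSum_prod_pi [CompleteSpace R] {r : ℕ} (f : Fin r → ι → R)
    (hf : ∀ i, Summable fun m => ‖f i m‖) :
    HasSum (fun m : Fin r → ι => ∏ i, f i (m i)) (∏ i, ∑' m, f i m) := by
  induction r with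
  | zero => simp
  | succ r ih =>
    have hsucc := ih (fun i => f i.succ) fun i => hf i.succ
    have hmul := (hf 0).of_norm.hasSum.mul hsucc
      ((hf 0).mul_norm (summable_norm_prod_pi _ fun i => hf i.succ)).of_norm
    rw [Fin.prod_univ_succ]
    refine (Fin.consEquiv fun _ => ι).hasSum_iff.mp ?_
    simpa only [Function.comp_def, Fin.prod_univ_consEquiv] using hmul

end PiProduct

section QSeries

variable {q : ℝ} {r : ℕ}

lemma rpow_sum_mul_natCast (hq : 0 < q) (d : Fin r → ℝ) (m : Fin r → ℕ) :
    q ^ (∑ i, d i * m i) = ∏ i, (q ^ d i) ^ m i := by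
  rw [Real.rpow_sum_of_pos hq]
  exact prod_congr rfl fun i _ => Real.rpow_mul_natCast hq.le _ _

lemma neg_one_pow_sum_mul_rpow_sum (hq : 0 < q) (d : Fin r → ℝ) (m : Fin r → ℕ) :
    (-1 : ℝ) ^ (∑ i, m i) * q ^ (∑ i, d i * m i) = ∏ i, (-q ^ d i) ^ m i := by
  rw [rpow_sum_mul_natCast hq, ← prod_pow_eq_pow_sum, ← prod_mul_distrib]
  exact prod_congr rfl fun i _ => (neg_pow _ _).symm

lemma norm_rpow_lt_one (hq0 : 0 < q) (hq1 : q < 1) {d : ℝ} (hd : 0 < d) : ‖q ^ d‖ < 1 := by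
  rw [Real.norm_of_nonneg (by positivity)]
  exact Real.rpow_lt_one hq0.le hq1 hd

lemma summable_rpow_sum (hq0 : 0 < q) (hq1 : q < 1) (d : Fin r → ℝ) (hd : ∀ i, 0 < d i) :
    Summable fun m : Fin r → ℕ => q ^ (∑ i, d i * m i) := by
  refine (summable_norm_prod_pi (fun i m => (q ^ d i) ^ m) fun i =>
    summable_norm_geometric_of_norm_lt_one (norm_rpow_lt_one hq0 hq1 (hd i))).congr fun m => ?_
  rw [rpow_sum_mul_natCast hq0, Real.norm_of_nonneg (by positivity)]

lemma hasSum_neg_one_pow_mul_rpow_sum (hq0 : 0 < q) (hq1 : q < 1) (d : Fin r → ℝ)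
    (hd : ∀ i, 0 < d i) :
    HasSum (fun m : Fin r → ℕ => (-1 : ℝ) ^ (∑ i, m i) * q ^ (∑ i, d i * m i))
      (∏ i, (1 + q ^ d i)⁻¹) := by
  have hnorm : ∀ i, ‖-q ^ d i‖ < 1 := fun i => by
    rw [norm_neg]
    exact norm_rpow_lt_one hq0 hq1 (hd i)
  have htsum : ∀ i, ∑' m : ℕ, (-q ^ d i) ^ m = (1 + q ^ d i)⁻¹ := fun i => by
    rw [tsum_geometric_of_norm_lt_one (hnorm i), sub_neg_eq_add]
  simpa only [htsum, neg_one_pow_sum_mul_rpow_sum hq0] using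
    hasSum_prod_pi (fun i m => (-q ^ d i) ^ m) fun i =>
      summable_norm_geometric_of_norm_lt_one (hnorm i)

lemma qnum_pow_eq_sum (hq : 0 < q) (y : ℝ) (n : ℕ) :
    qnum q y ^ n = ∑ l ∈ range (n + 1), n.choose l * (-1) ^ l * q ^ (l * y) / (1 - q) ^ n := by
  rw [qnum, div_pow, ← sum_div, sub_eq_add_neg, add_comm, add_pow]
  refine congrArg (· / _) (sum_congr rfl fun l _ => ?_)
  rw [one_pow, neg_pow, mul_comm (l : ℝ) y, Real.rpow_mul_natCast hq.le]
  ring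

lemma qnum_pos (hq0 : 0 < q) (hq1 : q < 1) {x : ℝ} (hx : 0 < x) : 0 < qnum q x :=
  div_pos (sub_pos.mpr (Real.rpow_lt_one hq0.le hq1 hx)) (sub_pos.mpr hq1)

lemma qnum_le_qnum (hq0 : 0 < q) (hq1 : q < 1) {x y : ℝ} (hxy : x ≤ y) :
    qnum q x ≤ qnum q y := by
  have := Real.rpow_le_rpow_of_exponent_ge hq0 hq1.le hxy
  unfold qnum
  gcongr

lemma qnum_le_inv_one_sub (hq0 : 0 < q) (hq1 : q < 1) (y : ℝ) : qnum q y ≤ (1 - q)⁻¹ := by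
  have := Real.rpow_pos_of_pos hq0 y
  rw [qnum, div_eq_mul_inv]
  exact mul_le_of_le_one_left (inv_pos.mpr (sub_pos.mpr hq1)).le (by linarith)

lemma rpow_le_max_of_mem_Icc {A B y : ℝ} (hA : 0 < A) (hAy : A ≤ y) (hyB : y ≤ B) (t : ℝ) :
    y ^ t ≤ max (A ^ t) (B ^ t) := by
  rcases le_total 0 t with ht | ht
  · exact le_max_of_le_right (Real.rpow_le_rpow (hA.le.trans hAy) hyB ht)
  · exact le_max_of_le_left (Real.rpow_le_rpow_of_nonpos hA hAy ht)

lemma summable_norm_zeta_term (hq0 : 0 < q) (hq1 : q < 1) {x : ℝ} (hx : 0 < x)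
    {w a : Fin r → ℝ} (hw : ∀ i, 0 ≤ w i) (ha : ∀ i, 0 < a i) (s : ℂ) :
    Summable fun m : Fin r → ℕ =>
      ‖(-1 : ℂ) ^ (∑ i, m i) * ((q ^ (∑ i, a i * m i) : ℝ) : ℂ) *
        ((qnum q (x + ∑ i, w i * m i) : ℝ) : ℂ) ^ (-s)‖ := by
  set C := max (qnum q x ^ (-s).re) ((1 - q)⁻¹ ^ (-s).re)
  refine .of_nonneg_of_le (fun _ => norm_nonneg _) (fun m => ?_)
    ((summable_rpow_sum hq0 hq1 a ha).mul_left C)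
  have hxy : x ≤ x + ∑ i, w i * m i :=
    le_add_of_nonneg_right (sum_nonneg fun i _ => mul_nonneg (hw i) (m i).cast_nonneg)
  have hlow := qnum_le_qnum hq0 hq1 hxy
  rw [norm_mul, norm_mul, norm_pow, norm_neg, norm_one, one_pow, one_mul, Complex.norm_real,
    Real.norm_of_nonneg (by positivity),
    Complex.norm_cpow_eq_rpow_re_of_pos ((qnum_pos hq0 hq1 hx).trans_le hlow), mul_comm C]
  exact mul_le_mul_of_nonneg_left (rpow_le_max_of_mem_Icc (qnum_pos hq0 hq1 hx) hlow
    (qnum_le_inv_one_sub hq0 hq1 _) _) (by positivity)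

lemma hasSum_zeta_term_neg_nat (hq0 : 0 < q) (hq1 : q < 1) {w a : Fin r → ℝ}
    (hw : ∀ i, 0 ≤ w i) (ha : ∀ i, 0 < a i) (x : ℝ) (n : ℕ) :
    HasSum (fun m : Fin r → ℕ =>
        (-1 : ℝ) ^ (∑ i, m i) * q ^ (∑ i, a i * m i) * qnum q (x + ∑ i, w i * m i) ^ n)
      (∑ l ∈ range (n + 1),
        n.choose l * (-1) ^ l * q ^ (l * x) / (1 - q) ^ n * ∏ j, (1 + q ^ (l * w j + a j))⁻¹) := by
  have hterm : ∀ (m : Fin r → ℕ) (l : ℕ),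
      (-1) ^ (∑ i, m i) * q ^ (∑ i, a i * m i) *
          (n.choose l * (-1) ^ l * q ^ (l * (x + ∑ i, w i * m i)) / (1 - q) ^ n) =
        n.choose l * (-1) ^ l * q ^ (l * x) / (1 - q) ^ n *
          ((-1) ^ (∑ i, m i) * q ^ (∑ i, (l * w i + a i) * m i)) := by
    intro m l
    have hexp : (∑ i, a i * m i) + l * (x + ∑ i, w i * m i) =
        l * x + ∑ i, (l * w i + a i) * m i := by
      simp only [add_mul, sum_add_distrib, mul_add, mul_sum]
      ring_nf
    have hpow := congrArg (q ^ ·) hexp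
    simp only [Real.rpow_add hq0] at hpow
    linear_combination (n.choose l * (-1) ^ l * (-1) ^ (∑ i, m i) / (1 - q) ^ n) * hpow
  simp_rw [qnum_pow_eq_sum hq0, mul_sum, hterm]
  exact hasSum_sum fun l _ => (hasSum_neg_one_pow_mul_rpow_sum hq0 hq1 _
    fun i => add_pos_of_nonneg_of_pos (mul_nonneg l.cast_nonneg (hw i)) (ha i)).mul_left _

end QSeries

theorem stmt_11_general (r : ℕ) (q : ℝ) (hq0 : 0 < q) (hq1 : q < 1)
    (x : ℝ) (hx : 0 < x) (w a : Fin r → ℝ) (hw : ∀ i, 0 < w i) (ha : ∀ i, 0 < a i) :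
    (∀ s : ℂ,
      Summable (fun m : Fin r → ℕ =>
        ‖(-1 : ℂ) ^ (∑ i, m i) * ((q ^ (∑ i, a i * m i) : ℝ) : ℂ) *
          ((qnum q (x + ∑ i, w i * m i) : ℝ) : ℂ) ^ (-s)‖)) ∧
    ∀ n : ℕ,
      (2 : ℂ) ^ r * ∑' m : Fin r → ℕ,
          (-1 : ℂ) ^ (∑ i, m i) * ((q ^ (∑ i, a i * m i) : ℝ) : ℂ) *
            ((qnum q (x + ∑ i, w i * m i) : ℝ) : ℂ) ^ (-(-(n : ℂ))) =
        (((2 : ℝ) ^ r / (1 - q) ^ n *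
          ∑ l ∈ range (n + 1),
            (n.choose l : ℝ) * (-1) ^ l * q ^ ((l : ℝ) * x) /
              ∏ j, (1 + q ^ ((l : ℝ) * w j + a j)) : ℝ) : ℂ) := by
  have hw' : ∀ i, 0 ≤ w i := fun i => (hw i).le
  refine ⟨summable_norm_zeta_term hq0 hq1 hx hw' ha, fun n => ?_⟩
  have hcast : ∀ m : Fin r → ℕ,
      (-1 : ℂ) ^ (∑ i, m i) * ((q ^ (∑ i, a i * m i) : ℝ) : ℂ) *
          ((qnum q (x + ∑ i, w i * m i) : ℝ) : ℂ) ^ (-(-(n : ℂ))) =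
        (((-1 : ℝ) ^ (∑ i, m i) * q ^ (∑ i, a i * m i) *
          qnum q (x + ∑ i, w i * m i) ^ n : ℝ) : ℂ) := fun m => by
    rw [neg_neg, Complex.cpow_natCast]
    push_cast
    ring
  simp_rw [hcast, ← Complex.ofReal_tsum, (hasSum_zeta_term_neg_nat hq0 hq1 hw' ha x n).tsum_eq]
  push_cast
  rw [mul_sum, mul_sum]
  refine sum_congr rfl fun l _ => ?_
  rw [prod_inv_distrib]
  field_simp

theorem stmt_11 (r : ℕ) (hr : 1 ≤ r) (q : ℝ) (hq0 : 0 < q) (hq1 : q < 1)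
    (x : ℝ) (hx : 0 < x) (w a : Fin r → ℝ) (hw : ∀ i, 0 < w i) (ha : ∀ i, 0 < a i) :
    (∀ s : ℂ,
      Summable (fun m : Fin r → ℕ =>
        ‖(-1 : ℂ) ^ (∑ i, m i) * ((q ^ (∑ i, a i * m i) : ℝ) : ℂ) *
          ((qnum q (x + ∑ i, w i * m i) : ℝ) : ℂ) ^ (-s)‖)) ∧
    ∀ n : ℕ,
      (2 : ℂ) ^ r * ∑' m : Fin r → ℕ,
          (-1 : ℂ) ^ (∑ i, m i) * ((q ^ (∑ i, a i * m i) : ℝ) : ℂ) *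
            ((qnum q (x + ∑ i, w i * m i) : ℝ) : ℂ) ^ (-(-(n : ℂ))) =
        (((2 : ℝ) ^ r / (1 - q) ^ n *
          ∑ l ∈ range (n + 1),
            (n.choose l : ℝ) * (-1) ^ l * q ^ ((l : ℝ) * x) /
              ∏ j, (1 + q ^ ((l : ℝ) * w j + a j)) : ℝ) : ℂ) :=
  stmt_11_general r q hq0 hq1 x hx w a hw ha
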